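/- Let X be a normal proper variety, D a big ℝ-divisor with divisorial Zariski decomposition D = P_σ(D) + N_σ(D), where N_σ(D) = Σ_Γ σ_Γ(D)·Γ. Then P_σ(D) is big and movable (i.e., N_σ(P_σ(D)) = 0), and if D is effective then P_σ(D) is effective. -/

import Mathlib

/-- An abstract model of the divisor theory of a proper normal algebraic variety
over a field `k`.  `K` is the function field, `Prime` is the set of prime (Weil)
divisors, and `ord Γ f` is the order of vanishing of the rational function `f`
along the prime divisor `Γ`. -/
structure NormalProperVariety (k : Type) [Field k] where
  /-- The function field `K(X)`. -/
  K : Type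
  [fieldK : Field K]
  [algK : Algebra k K]
  /-- The set of prime (Weil) divisors on `X`. -/
  Prime : Type
  /-- `ord Γ f` is the order of vanishing of `f` along `Γ`. -/
  ord : Prime → K → ℤ
  ord_mul : ∀ (Γ : Prime) {f g : K}, f ≠ 0 → g ≠ 0 →
      ord Γ (f * g) = ord Γ f + ord Γ g
  ord_add : ∀ (Γ : Prime) {f g : K}, f ≠ 0 → g ≠ 0 → f + g ≠ 0 →
      min (ord Γ f) (ord Γ g) ≤ ord Γ (f + g)
  ord_const : ∀ (Γ : Prime) (c : k), c ≠ 0 → ord Γ (algebraMap k K c) = 0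
  finite_ord : ∀ {f : K}, f ≠ 0 → {Γ : Prime | ord Γ f ≠ 0}.Finite

attribute [instance] NormalProperVariety.fieldK NormalProperVariety.algK

namespace NormalProperVariety

variable {k : Type} [Field k] (X : NormalProperVariety k)

open Classical

/-- ℝ-divisors on `X`: finite formal `ℝ`-linear combinations of prime divisors. -/
abbrev Div : Type := X.Prime →₀ ℝ

/-- The divisor `div(f)` of a rational function (by convention `0` for `f = 0`). -/
noncomputable def divOf (f : X.K) : X.Div :=
  if hf : f = 0 then 0
  else Finsupp.ofSupportFinite (fun Γ => (X.ord Γ f : ℝ))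
    (Set.Finite.subset (X.finite_ord hf) (by
      intro Γ hΓ
      simp only [Function.mem_support, ne_eq, Int.cast_eq_zero] at hΓ
      exact hΓ))

/-- The set of principal divisors `div(f)`, `f ∈ K(X)*`. -/
def Principal : Set X.Div := {D | ∃ f : X.K, f ≠ 0 ∧ D = X.divOf f}

/-- `ℝ`-linear equivalence: `D - D' = Σ aᵢ div(fᵢ)` with `aᵢ ∈ ℝ`. -/
def REquiv (D D' : X.Div) : Prop := D - D' ∈ Submodule.span ℝ X.Principal

/-- `ℚ`-linear equivalence: `D - D' = Σ aᵢ div(fᵢ)` with `aᵢ ∈ ℚ`. -/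
def QEquiv (D D' : X.Div) : Prop := D - D' ∈ Submodule.span ℚ X.Principal

/-- `ℤ`-linear equivalence: `D - D' = div(f)`. -/
def ZEquiv (D D' : X.Div) : Prop := ∃ f : X.K, f ≠ 0 ∧ D - D' = X.divOf f

/-- `H⁰(X, 𝒪_X(D)) = H⁰(X, 𝒪_X(⌊D⌋))` as a subset of the function field, namely
`{f ∈ K(X)* : div(f) + D ≥ 0} ∪ {0}`.  (Since `ord` takes integer values,
replacing `D` by its round-down `⌊D⌋` does not change this set.) -/
def H0 (D : X.Div) : Set X.K :=
  {f : X.K | f = 0 ∨ ∀ Γ : X.Prime, 0 ≤ (X.ord Γ f : ℝ) + D Γ}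

/-- `h⁰(D) = dim_k H⁰(X, 𝒪_X(⌊D⌋))`. -/
noncomputable def h0 (D : X.Div) : ℕ := Set.finrank k (X.H0 D)

/-- The volume `vol(D) = limsup_{m → ∞} h⁰(mD) / (mⁿ / n!)`, where `n = dim X`. -/
noncomputable def vol (n : ℕ) (D : X.Div) : ℝ :=
  Filter.limsup (fun m : ℝ => (X.h0 (m • D) : ℝ) * (n.factorial : ℝ) / m ^ n)
    Filter.atTop

/-- `D` is big iff `vol(D) > 0` (`n = dim X`). -/
def IsBig (n : ℕ) (D : X.Div) : Prop := 0 < X.vol n D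

/-- Nakayama's `σ_Γ(D) = inf { mult_Γ D' : D' ∼_ℝ D, D' ≥ 0 }`. -/
noncomputable def sigma (D : X.Div) (Γ : X.Prime) : ℝ :=
  sInf {t : ℝ | ∃ D' : X.Div, X.REquiv D' D ∧ 0 ≤ D' ∧ t = D' Γ}

/-- The negative part `N_σ(D) = Σ_Γ σ_Γ(D) · Γ` of the divisorial Zariski
decomposition (by convention `0` in the degenerate case where infinitely many of
the `σ_Γ(D)` are nonzero). -/
noncomputable def Nsigma (D : X.Div) : X.Div :=
  if h : (Function.support fun Γ => X.sigma D Γ).Finite then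
    Finsupp.ofSupportFinite _ h
  else 0

/-- The positive part `P_σ(D) = D - N_σ(D)`. -/
noncomputable def Psigma (D : X.Div) : X.Div := D - X.Nsigma D

/-- A big ℝ-divisor is movable if `N_σ(D) = 0`. -/
def Movable (D : X.Div) : Prop := X.Nsigma D = 0

end NormalProperVariety

/-!
`σ_Γ(D)` is an infimum over the effective divisors `D' ∼_ℝ D`, and bigness of `D` makes this
family nonempty (a nonzero section of `mD` gives `D + m⁻¹ div f`). Then `N_σ(D)` is bounded by
every such `D'`, so `D' ↦ D' - N_σ(D)` identifies the effective representatives of `D` with those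
of `P_σ(D)`; hence `σ_Γ(P_σ(D)) = 0`. The same bound shows that `mD` and `mP_σ(D)` have the same
sections for `m > 0`, so the volumes, and with them bigness, agree.
-/

theorem Set.finrank_eq_zero_of_subset_zero {R M : Type*} [Ring R] [Nontrivial R]
    [AddCommGroup M] [Module R M] {s : Set M} (hs : s ⊆ {0}) : Set.finrank R s = 0 := by
  rw [Set.finrank, Submodule.span_eq_bot.2 fun x hx => hs hx, finrank_bot]

namespace NormalProperVariety

variable {k : Type} [Field k] (X : NormalProperVariety k)

@[simp]
theorem divOf_zero : X.divOf 0 = 0 := dif_pos rfl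

theorem divOf_apply {f : X.K} (hf : f ≠ 0) (Γ : X.Prime) : X.divOf f Γ = X.ord Γ f := by
  rw [divOf, dif_neg hf]
  rfl

theorem divOf_mem_span (f : X.K) : X.divOf f ∈ Submodule.span ℝ X.Principal := by
  by_cases hf : f = 0
  · simp [hf]
  · exact Submodule.subset_span ⟨f, hf, rfl⟩

variable {X}

theorem REquiv.refl (D : X.Div) : X.REquiv D D := by
  simp [REquiv]

theorem rEquiv_add_smul_divOf (D : X.Div) (c : ℝ) (f : X.K) :
    X.REquiv (D + c • X.divOf f) D := by
  simpa [REquiv] using Submodule.smul_mem _ c (X.divOf_mem_span f)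

theorem rEquiv_sub_right_iff {D D' : X.Div} (N : X.Div) :
    X.REquiv (D' - N) (D - N) ↔ X.REquiv D' D := by
  simp only [REquiv, sub_sub_sub_cancel_right]

theorem mem_H0_iff {D : X.Div} {f : X.K} (hf : f ≠ 0) :
    f ∈ X.H0 D ↔ ∀ Γ, 0 ≤ (X.ord Γ f : ℝ) + D Γ := by
  simp [H0, hf]

theorem H0_mono {D D' : X.Div} (h : D ≤ D') : X.H0 D ⊆ X.H0 D' := by
  rintro f (hf | hf)
  · exact Or.inl hf
  · exact Or.inr fun Γ => (hf Γ).trans (add_le_add_right (h Γ) _)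

theorem nonneg_add_inv_smul_divOf {D : X.Div} {m : ℝ} (hm : 0 < m) {f : X.K} (hf : f ≠ 0)
    (hfD : f ∈ X.H0 (m • D)) : 0 ≤ D + m⁻¹ • X.divOf f := by
  intro Γ
  have h := (X.mem_H0_iff hf).1 hfD Γ
  have : 0 ≤ m⁻¹ * ((X.ord Γ f : ℝ) + m * D Γ) := mul_nonneg (inv_pos.2 hm).le h
  simp only [Finsupp.smul_apply, smul_eq_mul] at h
  simp only [Finsupp.coe_zero, Pi.zero_apply, Finsupp.add_apply, Finsupp.smul_apply,
    smul_eq_mul, X.divOf_apply hf]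
  rwa [mul_add, ← mul_assoc, inv_mul_cancel₀ hm.ne', one_mul, add_comm] at this

theorem sigma_nonneg (D : X.Div) (Γ : X.Prime) : 0 ≤ X.sigma D Γ :=
  Real.sInf_nonneg fun _ ⟨_, _, hD', ht⟩ => ht ▸ hD' Γ

theorem sigma_le {D D' : X.Div} (h : X.REquiv D' D) (h0 : 0 ≤ D') (Γ : X.Prime) :
    X.sigma D Γ ≤ D' Γ :=
  csInf_le ⟨0, fun _ ⟨_, _, hE, ht⟩ => ht ▸ hE Γ⟩ ⟨D', h, h0, rfl⟩

theorem le_sigma {D E : X.Div} (hE : X.REquiv E D) (hE0 : 0 ≤ E) {Γ : X.Prime} {t : ℝ}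
    (h : ∀ D', X.REquiv D' D → 0 ≤ D' → t ≤ D' Γ) : t ≤ X.sigma D Γ :=
  le_csInf ⟨E Γ, E, hE, hE0, rfl⟩ fun _ ⟨D', h1, h2, ht⟩ => ht ▸ h D' h1 h2

theorem support_sigma_subset {D E : X.Div} (hE : X.REquiv E D) (hE0 : 0 ≤ E) :
    Function.support (X.sigma D) ⊆ E.support := by
  intro Γ hΓ
  rw [Finset.mem_coe, Finsupp.mem_support_iff]
  intro hEΓ
  exact hΓ (le_antisymm (hEΓ ▸ sigma_le hE hE0 Γ) (sigma_nonneg D Γ))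

theorem Nsigma_apply {D E : X.Div} (hE : X.REquiv E D) (hE0 : 0 ≤ E) (Γ : X.Prime) :
    X.Nsigma D Γ = X.sigma D Γ := by
  rw [Nsigma, dif_pos ((E.support.finite_toSet).subset (support_sigma_subset hE hE0))]
  rfl

theorem Nsigma_nonneg (D : X.Div) : 0 ≤ X.Nsigma D := by
  unfold Nsigma
  split_ifs
  · exact fun Γ => sigma_nonneg D Γ
  · exact le_rfl

theorem Nsigma_le {D E : X.Div} (hE : X.REquiv E D) (hE0 : 0 ≤ E) : X.Nsigma D ≤ E :=
  fun Γ => (Nsigma_apply hE hE0 Γ).trans_le (sigma_le hE hE0 Γ)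

theorem Nsigma_eq_zero_of_forall_sigma_eq_zero {D : X.Div} (h : ∀ Γ, X.sigma D Γ = 0) : X.Nsigma D = 0 := by
  have hfin : (Function.support (X.sigma D)).Finite := by
    simp [Function.support, h]
  rw [Nsigma, dif_pos hfin]
  ext Γ
  exact h Γ

theorem Psigma_nonneg {D : X.Div} (hD : 0 ≤ D) : 0 ≤ X.Psigma D :=
  sub_nonneg.2 (Nsigma_le (REquiv.refl D) hD)

/-- `D' ↦ D' - N_σ(D)` maps the effective representatives of `D` onto those of `P_σ(D)`. -/
theorem sigma_Psigma {D E : X.Div} (hE : X.REquiv E D) (hE0 : 0 ≤ E) (Γ : X.Prime) :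
    X.sigma (X.Psigma D) Γ = 0 := by
  have hrepr : ∀ D', X.REquiv D' D → 0 ≤ D' →
      X.REquiv (D' - X.Nsigma D) (X.Psigma D) ∧ 0 ≤ D' - X.Nsigma D := fun D' h h0 =>
    ⟨(rEquiv_sub_right_iff _).2 h, sub_nonneg.2 (Nsigma_le h h0)⟩
  have hle : X.sigma (X.Psigma D) Γ + X.Nsigma D Γ ≤ X.sigma D Γ :=
    le_sigma hE hE0 fun D' h h0 =>
      le_sub_iff_add_le.1 (sigma_le (hrepr D' h h0).1 (hrepr D' h h0).2 Γ)
  rw [Nsigma_apply hE hE0] at hle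
  exact le_antisymm (by linarith) (sigma_nonneg _ Γ)

theorem movable_Psigma {D E : X.Div} (hE : X.REquiv E D) (hE0 : 0 ≤ E) :
    X.Movable (X.Psigma D) :=
  Nsigma_eq_zero_of_forall_sigma_eq_zero (sigma_Psigma hE hE0)

theorem H0_smul_Psigma (D : X.Div) {m : ℝ} (hm : 0 < m) :
    X.H0 (m • X.Psigma D) = X.H0 (m • D) := by
  refine (H0_mono (smul_le_smul_of_nonneg_left (sub_le_self _ (Nsigma_nonneg D)) hm.le)).antisymm
    fun f hfD => ?_
  by_cases hf : f = 0
  · exact Or.inl hf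
  have hN := Nsigma_le (rEquiv_add_smul_divOf D m⁻¹ f) (nonneg_add_inv_smul_divOf hm hf hfD)
  refine Or.inr fun Γ => ?_
  have h := mul_le_mul_of_nonneg_left (hN Γ) hm.le
  simp only [Finsupp.add_apply, Finsupp.smul_apply, smul_eq_mul, X.divOf_apply hf, mul_add,
    ← mul_assoc, mul_inv_cancel₀ hm.ne', one_mul] at h
  simp only [Finsupp.smul_apply, Finsupp.sub_apply, smul_eq_mul, mul_sub]
  linarith

theorem vol_Psigma (n : ℕ) (D : X.Div) : X.vol n (X.Psigma D) = X.vol n D := by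
  refine Filter.limsup_congr ?_
  filter_upwards [Filter.eventually_gt_atTop 0] with m hm
  rw [h0, h0, H0_smul_Psigma D hm]

theorem exists_nonneg_rEquiv_of_isBig {n : ℕ} {D : X.Div} (hD : X.IsBig n D) :
    ∃ E, X.REquiv E D ∧ 0 ≤ E := by
  by_contra hno
  have hH0 : ∀ m : ℝ, 0 < m → X.H0 (m • D) ⊆ {0} := fun m hm f hfD => by
    by_contra hf
    exact hno ⟨_, rEquiv_add_smul_divOf D m⁻¹ f, nonneg_add_inv_smul_divOf hm hf hfD⟩
  have hvol : X.vol n D = 0 := by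
    refine (Filter.limsup_congr ?_).trans (Filter.limsup_const (0 : ℝ))
    filter_upwards [Filter.eventually_gt_atTop 0] with m hm
    simp [h0, Set.finrank_eq_zero_of_subset_zero (hH0 m hm)]
  exact hD.ne' hvol

end NormalProperVariety

/-- Let `X` be a normal proper variety and `D` a big ℝ-divisor, with
divisorial Zariski decomposition `D = P_σ(D) + N_σ(D)`.  Then `P_σ(D)` is big and
movable, and if `D` is effective then so is `P_σ(D)`. -/
theorem psigma_big_movable {k : Type} [Field k] (X : NormalProperVariety k) (n : ℕ)
    (D : X.Div) (hD : X.IsBig n D) :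
    X.IsBig n (X.Psigma D) ∧ X.Movable (X.Psigma D) ∧
      (0 ≤ D → 0 ≤ X.Psigma D) := by
  obtain ⟨E, hE, hE0⟩ := NormalProperVariety.exists_nonneg_rEquiv_of_isBig hD
  refine ⟨?_, NormalProperVariety.movable_Psigma hE hE0, NormalProperVariety.Psigma_nonneg⟩
  rw [NormalProperVariety.IsBig, NormalProperVariety.vol_Psigma]
  exact hD
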